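/- Let S₁, S₂, S₃ satisfy [S_α, S_β] = i ∑_γ ε_{αβγ} S_γ, pairwise Hilbert–Schmidt orthogonal with common normalized Frobenius norm c. With H_c^f = C_H S₁, ρ_c^i = C_ρ(S₁ cos φ + S₂ sin φ), C_H, C_ρ > 0, and H = S₃/c, the extracted work W(T) := −Tr(H_c^f e^{−iωT H} ρ_c^i e^{iωT H}) + Tr(H_c^f ρ_c^i) equals −D‖H_c^f‖‖ρ_c^i‖ cos(ωT/c + φ) + Tr(H_c^f ρ_c^i), where D is the Hilbert space dimension and ‖·‖ the normalized Frobenius norm. -/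

import Mathlib

open Matrix

/-- Normalized Frobenius norm. -/
noncomputable def nfrob {D : ℕ} (M : Matrix (Fin D) (Fin D) ℂ) : ℝ :=
  Real.sqrt (((Mᴴ * M).trace).re / D)

/-- `evol M t = e^{-itM}`. -/
noncomputable def evol {D : ℕ} (M : Matrix (Fin D) (Fin D) ℂ) (t : ℝ) :
    Matrix (Fin D) (Fin D) ℂ :=
  NormedSpace.exp ((((-t : ℝ) : ℂ) * Complex.I) • M)

/-! The ladder operators `S₀ ± i S₁` are eigenvectors of `ad S₂` with eigenvalues `±1`, so
conjugation by `e^{-iθS₂}` multiplies them by `e^{∓iθ}`. Writing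
`cos φ S₀ + sin φ S₁ = (e^{-iφ} (S₀ + i S₁) + e^{iφ} (S₀ - i S₁)) / 2`, the conjugation therefore
rotates the angle `φ` to `φ + θ`, with `θ = ωT/c`. The trace against `S₀` then picks up
`cos (φ + θ) Tr(S₀²) = cos (φ + θ) D c²` by orthogonality, and `‖H_c^f‖ = C_H c`, `‖ρ_c^i‖ = C_ρ c`
by Pythagoras. -/

open Complex

lemma cos_smul_add_sin_smul_eq_ladder {M : Type*} [AddCommGroup M] [Module ℂ M]
    (x y : M) (φ : ℂ) :
    cos φ • x + sin φ • y
      = (exp (-φ * I) / 2) • (x + I • y) + (exp (φ * I) / 2) • (x - I • y) := by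
  rw [cos, sin]
  match_scalars <;> ring_nf

section BanachAlgebra

variable {𝔸 : Type*} [NormedRing 𝔸] [NormedAlgebra ℂ 𝔸] [CompleteSpace 𝔸]

lemma exp_mul_exp_neg_self (a : 𝔸) : NormedSpace.exp a * NormedSpace.exp (-a) = 1 := by
  let +nondep : NormedAlgebra ℚ 𝔸 := .restrictScalars ℚ ℂ 𝔸
  rw [← NormedSpace.exp_add_of_commute (Commute.refl a).neg_right, add_neg_cancel,
    NormedSpace.exp_zero]

lemma exp_mul_mul_exp_neg_of_commutator_eq_smul {a p : 𝔸} {μ : ℂ}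
    (h : a * p - p * a = μ • p) :
    NormedSpace.exp a * p * NormedSpace.exp (-a) = exp μ • p := by
  let +nondep : NormedAlgebra ℚ 𝔸 := .restrictScalars ℚ ℂ 𝔸
  have hsemi : SemiconjBy p (a + μ • 1) a := by
    rw [SemiconjBy, mul_add, mul_smul_one, ← h]; abel
  have hexp_shift : NormedSpace.exp (a + μ • 1) = exp μ • NormedSpace.exp a := by
    rw [NormedSpace.exp_add_of_commute ((Commute.one_right a).smul_right μ),
      ← Algebra.algebraMap_eq_smul_one, ← NormedSpace.algebraMap_exp_comm,
      Algebra.algebraMap_eq_smul_one, mul_smul_one, exp_eq_exp_ℂ]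
  rw [← hsemi.exp_right.eq, hexp_shift, mul_smul_comm, smul_mul_assoc, mul_assoc,
    exp_mul_exp_neg_self, mul_one]

lemma exp_mul_cos_smul_add_sin_smul_mul_exp_neg {S₀ S₁ S₂ : 𝔸}
    (h20 : S₂ * S₀ - S₀ * S₂ = I • S₁) (h12 : S₁ * S₂ - S₂ * S₁ = I • S₀) (θ φ : ℂ) :
    NormedSpace.exp ((-θ * I) • S₂) * (cos φ • S₀ + sin φ • S₁) *
        NormedSpace.exp (-((-θ * I) • S₂))
      = cos (φ + θ) • S₀ + sin (φ + θ) • S₁ := by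
  have h21 : S₂ * S₁ - S₁ * S₂ = -(I • S₀) := by rw [← h12]; abel
  have hraise : S₂ * (S₀ + I • S₁) - (S₀ + I • S₁) * S₂ = (1 : ℂ) • (S₀ + I • S₁) := by
    calc _ = (S₂ * S₀ - S₀ * S₂) + I • (S₂ * S₁ - S₁ * S₂) := by
            simp only [mul_add, add_mul, mul_smul_comm, smul_mul_assoc, smul_sub]; abel
      _ = _ := by rw [h20, h21, smul_neg, smul_smul, I_mul_I]; module
  have hlower : S₂ * (S₀ - I • S₁) - (S₀ - I • S₁) * S₂ = (-1 : ℂ) • (S₀ - I • S₁) := by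
    calc _ = (S₂ * S₀ - S₀ * S₂) - I • (S₂ * S₁ - S₁ * S₂) := by
            simp only [mul_sub, sub_mul, mul_smul_comm, smul_mul_assoc, smul_sub]; abel
      _ = _ := by rw [h20, h21, smul_neg, smul_smul, I_mul_I]; module
  have conj_ladder : ∀ (μ : ℂ) (p : 𝔸), S₂ * p - p * S₂ = μ • p →
      NormedSpace.exp ((-θ * I) • S₂) * p * NormedSpace.exp (-((-θ * I) • S₂))
        = exp (-θ * I * μ) • p := fun μ p hp =>
    exp_mul_mul_exp_neg_of_commutator_eq_smul (by
      rw [smul_mul_assoc, mul_smul_comm, ← smul_sub, hp, smul_smul])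
  rw [cos_smul_add_sin_smul_eq_ladder, mul_add, add_mul, mul_smul_comm, smul_mul_assoc,
    mul_smul_comm, smul_mul_assoc, conj_ladder 1 _ hraise, conj_ladder (-1) _ hlower,
    smul_smul, smul_smul, cos_smul_add_sin_smul_eq_ladder, div_mul_eq_mul_div,
    div_mul_eq_mul_div, ← exp_add, ← exp_add]
  ring_nf

end BanachAlgebra

section Matrix

variable {D : ℕ}

lemma nfrob_nonneg (M : Matrix (Fin D) (Fin D) ℂ) : 0 ≤ nfrob M := Real.sqrt_nonneg _

lemma re_trace_conjTranspose_mul_self_nonneg (M : Matrix (Fin D) (Fin D) ℂ) :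
    0 ≤ (Mᴴ * M).trace.re := by
  simp only [trace, diag, mul_apply, conjTranspose_apply, re_sum]
  exact Finset.sum_nonneg fun i _ => Finset.sum_nonneg fun j _ => by
    rw [star_def, ← normSq_eq_conj_mul_self]; exact normSq_nonneg _

lemma nfrob_sq (M : Matrix (Fin D) (Fin D) ℂ) : nfrob M ^ 2 = (Mᴴ * M).trace.re / D :=
  Real.sq_sqrt (div_nonneg (re_trace_conjTranspose_mul_self_nonneg M) D.cast_nonneg)

lemma re_trace_conjTranspose_mul_self (M : Matrix (Fin D) (Fin D) ℂ) :
    (Mᴴ * M).trace.re = D * nfrob M ^ 2 := by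
  rcases Nat.eq_zero_or_pos D with rfl | hD
  · simp [trace]
  rw [nfrob_sq, mul_div_cancel₀ _ (by positivity)]

lemma nfrob_ofReal_smul (r : ℝ) (M : Matrix (Fin D) (Fin D) ℂ) :
    nfrob ((r : ℂ) • M) = |r| * nfrob M := by
  rw [nfrob, nfrob, conjTranspose_smul, smul_mul, Matrix.mul_smul, smul_smul, trace_smul,
    star_def, conj_ofReal, smul_eq_mul, ← ofReal_mul, re_ofReal_mul, mul_div_assoc,
    Real.sqrt_mul (mul_self_nonneg r), Real.sqrt_mul_self_eq_abs]

lemma nfrob_add_sq {A B : Matrix (Fin D) (Fin D) ℂ} (h : (Aᴴ * B).trace = 0) :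
    nfrob (A + B) ^ 2 = nfrob A ^ 2 + nfrob B ^ 2 := by
  have h' : (Bᴴ * A).trace = 0 := by
    rw [← conjTranspose_conjTranspose A, ← conjTranspose_mul, trace_conjTranspose, h, star_zero]
  rw [nfrob_sq, nfrob_sq, nfrob_sq, ← add_div, ← add_re, conjTranspose_add, add_mul, mul_add,
    mul_add, trace_add, trace_add, trace_add, h, h', add_zero, zero_add]

lemma nfrob_cos_smul_add_sin_smul {S₀ S₁ : Matrix (Fin D) (Fin D) ℂ} {c : ℝ}
    (hH₀ : S₀.IsHermitian) (horth : (S₀ * S₁).trace = 0) (h₀ : nfrob S₀ = c)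
    (h₁ : nfrob S₁ = c) (φ : ℝ) :
    nfrob (((Real.cos φ : ℝ) : ℂ) • S₀ + ((Real.sin φ : ℝ) : ℂ) • S₁) = c := by
  have hc : 0 ≤ c := h₀ ▸ nfrob_nonneg S₀
  have hperp : ((((Real.cos φ : ℝ) : ℂ) • S₀)ᴴ * (((Real.sin φ : ℝ) : ℂ) • S₁)).trace = 0 := by
    rw [conjTranspose_smul, hH₀.eq, smul_mul, Matrix.mul_smul, trace_smul, trace_smul, horth,
      smul_zero, smul_zero]
  refine (pow_left_inj₀ (nfrob_nonneg _) hc two_ne_zero).1 ?_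
  rw [nfrob_add_sq hperp, nfrob_ofReal_smul, nfrob_ofReal_smul, mul_pow, mul_pow, sq_abs, sq_abs,
    h₀, h₁]
  linear_combination c ^ 2 * Real.sin_sq_add_cos_sq φ

lemma evol_ofReal_smul (r t : ℝ) (M : Matrix (Fin D) (Fin D) ℂ) :
    evol ((r : ℂ) • M) t = evol M (r * t) := by
  rw [evol, evol, smul_smul]
  congr 2
  push_cast
  ring

open scoped Matrix.Norms.Operator in
lemma evol_mul_cos_smul_add_sin_smul_mul_evol_neg {S₀ S₁ S₂ : Matrix (Fin D) (Fin D) ℂ}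
    (h20 : S₂ * S₀ - S₀ * S₂ = I • S₁) (h12 : S₁ * S₂ - S₂ * S₁ = I • S₀) (θ φ : ℝ) :
    evol S₂ θ * (((Real.cos φ : ℝ) : ℂ) • S₀ + ((Real.sin φ : ℝ) : ℂ) • S₁) * evol S₂ (-θ)
      = ((Real.cos (φ + θ) : ℝ) : ℂ) • S₀ + ((Real.sin (φ + θ) : ℝ) : ℂ) • S₁ := by
  have := exp_mul_cos_smul_add_sin_smul_mul_exp_neg h20 h12 θ φ
  rw [← neg_smul, ← neg_mul, neg_neg] at this
  rw [evol, evol]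
  push_cast
  rwa [neg_neg]

end Matrix

theorem stmt_10_general (D : ℕ) (S : Fin 3 → Matrix (Fin D) (Fin D) ℂ)
    (hH : ∀ α, (S α).IsHermitian)
    (hc12 : S 1 * S 2 - S 2 * S 1 = Complex.I • S 0)
    (hc20 : S 2 * S 0 - S 0 * S 2 = Complex.I • S 1)
    (horth : ∀ α β, α ≠ β → (S α * S β).trace = 0)
    (c : ℝ) (hnorm : ∀ α, nfrob (S α) = c)
    (CH Cρ ω T φ : ℝ) (hCH : 0 < CH) (hCρ : 0 < Cρ)
    (Hf ρ Hop : Matrix (Fin D) (Fin D) ℂ)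
    (hHf : Hf = (CH : ℂ) • S 0)
    (hρ : ρ = (Cρ : ℂ) • (((Real.cos φ : ℝ) : ℂ) • S 0 + ((Real.sin φ : ℝ) : ℂ) • S 1))
    (hHop : Hop = ((c⁻¹ : ℝ) : ℂ) • S 2) :
    -((Hf * (evol Hop (ω * T) * ρ * evol Hop (-(ω * T)))).trace).re +
        ((Hf * ρ).trace).re
      = -(D : ℝ) * nfrob Hf * nfrob ρ * Real.cos (ω * T / c + φ) +
          ((Hf * ρ).trace).re := by
  have h01 : (S 0 * S 1).trace = 0 := horth 0 1 (by decide)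
  have h00 : (S 0 * S 0).trace.re = D * c ^ 2 := by
    simpa only [(hH 0).eq, hnorm] using re_trace_conjTranspose_mul_self (S 0)
  have hnorm_ρ : nfrob ρ = Cρ * c := by
    rw [hρ, nfrob_ofReal_smul, abs_of_pos hCρ,
      nfrob_cos_smul_add_sin_smul (hH 0) h01 (hnorm 0) (hnorm 1)]
  have hnorm_Hf : nfrob Hf = CH * c := by rw [hHf, nfrob_ofReal_smul, abs_of_pos hCH, hnorm]
  have hrotate : evol Hop (ω * T) * ρ * evol Hop (-(ω * T))
      = (Cρ : ℂ) • (((Real.cos (ω * T / c + φ) : ℝ) : ℂ) • S 0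
          + ((Real.sin (ω * T / c + φ) : ℝ) : ℂ) • S 1) := by
    rw [hHop, hρ, evol_ofReal_smul, evol_ofReal_smul, mul_neg, Matrix.mul_smul, Matrix.smul_mul,
      evol_mul_cos_smul_add_sin_smul_mul_evol_neg hc20 hc12, add_comm φ, inv_mul_eq_div]
  rw [hrotate, hnorm_ρ, hnorm_Hf, hHf, smul_mul, Matrix.mul_smul, Matrix.mul_add,
    Matrix.mul_smul, Matrix.mul_smul, trace_smul, trace_smul, trace_add, trace_smul, trace_smul,
    h01, smul_zero, add_zero]
  simp only [smul_eq_mul, re_ofReal_mul, h00]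
  ring

/-- Closed-form cosine dependence of the extracted work under su(2) control:
`W(T) = -Tr(H_c^f e^{-iωTH} ρ_c^i e^{iωTH}) + Tr(H_c^f ρ_c^i)
      = -D‖H_c^f‖‖ρ_c^i‖ cos(ωT/c + φ) + Tr(H_c^f ρ_c^i)`. -/
theorem stmt_10 (D : ℕ) (hD : 0 < D) (S : Fin 3 → Matrix (Fin D) (Fin D) ℂ)
    (hH : ∀ α, (S α).IsHermitian)
    (hc01 : S 0 * S 1 - S 1 * S 0 = Complex.I • S 2)
    (hc12 : S 1 * S 2 - S 2 * S 1 = Complex.I • S 0)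
    (hc20 : S 2 * S 0 - S 0 * S 2 = Complex.I • S 1)
    (horth : ∀ α β, α ≠ β → (S α * S β).trace = 0)
    (c : ℝ) (hc : 0 < c) (hnorm : ∀ α, nfrob (S α) = c)
    (CH Cρ ω T φ : ℝ) (hCH : 0 < CH) (hCρ : 0 < Cρ) (hω : 0 < ω)
    (hφ : φ ∈ Set.Icc 0 Real.pi)
    (Hf ρ Hop : Matrix (Fin D) (Fin D) ℂ)
    (hHf : Hf = (CH : ℂ) • S 0)
    (hρ : ρ = (Cρ : ℂ) • (((Real.cos φ : ℝ) : ℂ) • S 0 + ((Real.sin φ : ℝ) : ℂ) • S 1))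
    (hHop : Hop = ((c⁻¹ : ℝ) : ℂ) • S 2) :
    -((Hf * (evol Hop (ω * T) * ρ * evol Hop (-(ω * T)))).trace).re +
        ((Hf * ρ).trace).re
      = -(D : ℝ) * nfrob Hf * nfrob ρ * Real.cos (ω * T / c + φ) +
          ((Hf * ρ).trace).re :=
  stmt_10_general D S hH hc12 hc20 horth c hnorm CH Cρ ω T φ hCH hCρ Hf ρ Hop hHf hρ hHop
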